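/- arXiv:2311.06006 — 4 statements merged into one kernel-verified Lean document; each statement's English description precedes it below -/
import Mathlib

section
/- Let a = a_1⋯a_k ∈ {0,1}^k and b = b_1⋯b_j ∈ {0,1}^j be two finite binary words. Then N(a) = N(b) if and only if X(a) = X(b). -/
/-!
Since `φ² = φ + 1` and `ψ² = ψ + 1`, every power `x ^ (n + 1)` with `x ∈ {φ, ψ}` equals
`F_{n+1} x + F_n`, so `X(a) = N(a) φ + M(a)` and `Y(a) = N(a) ψ + M(a)` with the same integer
`M(a) = ∑ a_i F_{k+1-i}`. As `φ` is irrational, `X(a)` determines `N(a)`. Conversely, `ψ ∈ (-1, 0)`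
forces `Y(a)` of a binary word into the open interval `(-ψ - 1, -ψ)` of length one, so for
`N(a) = N(b)` the integer `M(a) - M(b) = Y(a) - Y(b)` vanishes and `X(a) = X(b)`.
-/

open Real Finset

noncomputable section

/-- The golden mean φ = (1+√5)/2. -/
def phi : ℝ := (1 + Real.sqrt 5) / 2

/-- ψ = (1−√5)/2 = −1/φ. -/
def psi : ℝ := (1 - Real.sqrt 5) / 2

/-- A word `a : Fin k → ℕ` is binary if all its letters are 0 or 1. -/
def IsBin {k : ℕ} (a : Fin k → ℕ) : Prop := ∀ i, a i ≤ 1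

/-- N(a) = ∑_{i=1}^k a_i F_{k+2−i}  (here `i : Fin k` corresponds to `i+1`). -/
def Nw {k : ℕ} (a : Fin k → ℕ) : ℕ := ∑ i : Fin k, a i * Nat.fib (k + 1 - (i : ℕ))

/-- X(a) = ∑_{i=1}^k a_i φ^{k+2−i}. -/
def Xw {k : ℕ} (a : Fin k → ℕ) : ℝ := ∑ i : Fin k, (a i : ℝ) * phi ^ (k + 1 - (i : ℕ))

/-- Y(a) = ∑_{i=1}^k a_i ψ^{k+2−i}. -/
def Yw {k : ℕ} (a : Fin k → ℕ) : ℝ := ∑ i : Fin k, (a i : ℝ) * psi ^ (k + 1 - (i : ℕ))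

open scoped goldenRatio

lemma Irrational.eq_of_intCast_mul_add_eq {x : ℝ} (hx : Irrational x) {m n p q : ℤ}
    (h : m * x + n = p * x + q) : m = p := by
  by_contra hmp
  have hlin : ((m - p : ℤ) : ℝ) * x = ((q - n : ℤ) : ℝ) := by push_cast; linarith
  exact (hx.intCast_mul (sub_ne_zero.2 hmp)).ne_int _ hlin

lemma pow_succ_eq_fib_mul_add_fib {x : ℝ} (hx : x ^ 2 = x + 1) (n : ℕ) :
    x ^ (n + 1) = Nat.fib (n + 1) * x + Nat.fib n := by
  induction n with
  | zero => simp
  | succ n ih =>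
    rw [pow_succ, ih, Nat.fib_add_two]
    push_cast
    linear_combination (Nat.fib (n + 1) : ℝ) * hx

def Mw {k : ℕ} (a : Fin k → ℕ) : ℕ := ∑ i : Fin k, a i * Nat.fib (k - (i : ℕ))

lemma sum_mul_pow_eq_Nw_mul_add_Mw {x : ℝ} (hx : x ^ 2 = x + 1) {k : ℕ} (a : Fin k → ℕ) :
    ∑ i : Fin k, (a i : ℝ) * x ^ (k + 1 - (i : ℕ)) = Nw a * x + Mw a := by
  simp only [Nw, Mw, Nat.cast_sum, Nat.cast_mul, Finset.sum_mul, ← Finset.sum_add_distrib]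
  refine Finset.sum_congr rfl fun i _ => ?_
  rw [show k + 1 - (i : ℕ) = k - i + 1 by omega, pow_succ_eq_fib_mul_add_fib hx]
  ring

lemma Xw_eq_Nw_mul_add_Mw {k : ℕ} (a : Fin k → ℕ) : Xw a = Nw a * phi + Mw a :=
  sum_mul_pow_eq_Nw_mul_add_Mw goldenRatio_sq a

lemma Yw_eq_Nw_mul_add_Mw {k : ℕ} (a : Fin k → ℕ) : Yw a = Nw a * psi + Mw a :=
  sum_mul_pow_eq_Nw_mul_add_Mw goldenConj_sq a

lemma Yw_castSucc {k : ℕ} (a : Fin (k + 1) → ℕ) :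
    Yw a = psi * Yw (fun i : Fin k => a i.castSucc) + a (Fin.last k) * psi ^ 2 := by
  simp only [Yw, Fin.sum_univ_castSucc, Finset.mul_sum, Fin.val_castSucc, Fin.val_last,
    show k + 1 + 1 - k = 2 by omega]
  congr 1
  refine Finset.sum_congr rfl fun i _ => ?_
  rw [show k + 1 + 1 - (i : ℕ) = k + 1 - i + 1 by omega]
  ring

lemma Yw_mem_Ioo {k : ℕ} {a : Fin k → ℕ} (ha : IsBin a) :
    Yw a ∈ Set.Ioo (-psi - 1) (-psi) := by
  have hψ₀ : psi < 0 := goldenConj_neg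
  have hψ₁ : -1 < psi := neg_one_lt_goldenConj
  have hψ₂ : psi ^ 2 = psi + 1 := goldenConj_sq
  induction k with
  | zero => simp only [Yw, univ_eq_empty, sum_empty, Set.mem_Ioo]; constructor <;> linarith
  | succ k ih =>
    obtain ⟨hlo, hhi⟩ := ih (a := fun i => a i.castSucc) fun i => ha _
    have hlo' := mul_lt_mul_of_neg_left hlo hψ₀
    have hhi' := mul_lt_mul_of_neg_left hhi hψ₀
    rw [Yw_castSucc, Set.mem_Ioo]
    -- the last letter adds `0` or `ψ² = ψ + 1` to `ψ · Y(a_1 ⋯ a_k)`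
    rcases Nat.le_one_iff_eq_zero_or_eq_one.1 (ha (Fin.last k)) with hlast | hlast <;>
      rw [hlast] <;> push_cast <;> constructor <;> linarith

lemma Mw_eq_of_Nw_eq {k j : ℕ} {a : Fin k → ℕ} {b : Fin j → ℕ} (ha : IsBin a) (hb : IsBin b)
    (h : Nw a = Nw b) : Mw a = Mw b := by
  have hdiff : ((Mw a - Mw b : ℤ) : ℝ) = Yw a - Yw b := by
    push_cast
    rw [Yw_eq_Nw_mul_add_Mw, Yw_eq_Nw_mul_add_Mw, h]
    ring
  obtain ⟨hlo_a, hhi_a⟩ := Yw_mem_Ioo ha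
  obtain ⟨hlo_b, hhi_b⟩ := Yw_mem_Ioo hb
  have habs : |(Mw a - Mw b : ℤ)| < 1 := by
    rw [← Int.cast_lt (R := ℝ), Int.cast_abs, hdiff, Int.cast_one, abs_lt]
    constructor <;> linarith
  exact_mod_cast sub_eq_zero.1 (Int.abs_lt_one_iff.1 habs)

/-- for binary words a, b, N(a) = N(b) iff X(a) = X(b). -/
theorem stmt_0 {k j : ℕ} (a : Fin k → ℕ) (b : Fin j → ℕ)
    (ha : IsBin a) (hb : IsBin b) :
    Nw a = Nw b ↔ Xw a = Xw b := by
  rw [Xw_eq_Nw_mul_add_Mw, Xw_eq_Nw_mul_add_Mw]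
  constructor
  · intro h
    rw [h, Mw_eq_of_Nw_eq ha hb h]
  · intro h
    have h' : ((Nw a : ℤ) : ℝ) * φ + (Mw a : ℤ) = ((Nw b : ℤ) : ℝ) * φ + (Mw b : ℤ) := by
      exact_mod_cast h
    exact_mod_cast goldenRatio_irrational.eq_of_intCast_mul_add_eq h'

end
end

section
/- For every natural number n ≥ 0: x_n − y_n = √5·n, the number x_n − nφ = y_n − nψ is an integer, and y_n ∈ [−1/φ², 1/φ). Consequently y_n = T^n(0), the n-th iterate of 0 under the rotation T. -/
open Real Finset

noncomputable section

/-- R(n): the number of partitions of n into distinct Fibonacci numbers, i.e. the number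
of finite sets S of integers, each ≥ 2, with n = ∑_{i∈S} F_i.  (So R(0) = 1.) -/
def R (n : ℕ) : ℕ :=
  Nat.card {S : Finset ℕ // (∀ i ∈ S, 2 ≤ i) ∧ ∑ i ∈ S, Nat.fib i = n}

/-- `IsZeck n b` : `b = b_1⋯b_k` is the Zeckendorf word of `n ≥ 1`, i.e. a binary word
with `b_1 = 1`, no two consecutive 1's, and N(b) = n. -/
def IsZeck (n : ℕ) {k : ℕ} (b : Fin k → ℕ) : Prop :=
  IsBin b ∧ (∀ h : 0 < k, b ⟨0, h⟩ = 1) ∧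
    (∀ i j : Fin k, (j : ℕ) = (i : ℕ) + 1 → b i * b j = 0) ∧ Nw b = n

/-- `IsXY n x y` : `(x, y) = (x_n, y_n)`, i.e. `x = X(b)` and `y = Y(b)` for the
Zeckendorf word `b` of `n` when `n ≥ 1`, and `(x, y) = (0, 0)` when `n = 0`. -/
def IsXY (n : ℕ) (x y : ℝ) : Prop :=
  (n = 0 ∧ x = 0 ∧ y = 0) ∨
    ∃ (k : ℕ) (b : Fin k → ℕ), IsZeck n b ∧ x = Xw b ∧ y = Yw b

/-- The rotation T by 1/φ² on [−1/φ², 1/φ), extended to ℝ by the same formula. -/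
def T (y : ℝ) : ℝ := if y < 1 / phi ^ 3 then y + 1 / phi ^ 2 else y + 1 / phi ^ 2 - 1

lemma sqrt5_sq : Real.sqrt 5 ^ 2 = 5 := Real.sq_sqrt (by norm_num)
lemma sqrt5_gt : (2:ℝ) < Real.sqrt 5 := by nlinarith [Real.sqrt_nonneg 5, sqrt5_sq]
lemma sqrt5_lt : Real.sqrt 5 < 3 := by nlinarith [Real.sqrt_nonneg 5, sqrt5_sq]
lemma phi_pos : 0 < phi := by unfold phi; linarith [sqrt5_gt]
lemma one_lt_phi : 1 < phi := by unfold phi; linarith [sqrt5_gt]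
lemma phi_sq : phi ^ 2 = phi + 1 := by unfold phi; nlinarith [sqrt5_sq]
lemma psi_sq : psi ^ 2 = psi + 1 := by unfold psi; nlinarith [sqrt5_sq]
lemma psi_eq : psi = 1 - phi := by unfold phi psi; ring
lemma phi_sub_psi : phi - psi = Real.sqrt 5 := by unfold phi psi; ring
lemma psi_eq_neg_inv : psi = -(1/phi) := by
  have h := phi_pos
  field_simp
  unfold phi psi; nlinarith [sqrt5_sq]
lemma inv_sq : (1:ℝ)/phi^2 = 2 - phi := by
  have h := phi_pos
  field_simp
  nlinarith [phi_sq]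
lemma q2 : (1:ℝ)/phi + 1/phi^2 = 1 := by
  have h := phi_pos
  field_simp
  nlinarith [phi_sq]
lemma q3 : (1:ℝ)/phi^3 + 1/phi^2 = 1/phi := by
  have h := phi_pos
  have h3 : phi ≠ 0 := ne_of_gt h
  field_simp
  linear_combination (-1 : ℝ) * phi_sq
lemma qpos : (0:ℝ) < 1/phi := div_pos one_pos phi_pos
lemma q2pos : (0:ℝ) < 1/phi^2 := div_pos one_pos (pow_pos phi_pos 2)

lemma phi_pow : ∀ m : ℕ, phi ^ (m+1) = Nat.fib (m+1) * phi + Nat.fib m := by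
  intro m
  induction m with
  | zero => simp
  | succ m ih =>
    have : phi ^ (m+2) = phi ^ (m+1) * phi := by ring
    rw [this, ih, Nat.fib_add_two]
    push_cast
    nlinarith [phi_sq]

lemma psi_pow : ∀ m : ℕ, psi ^ (m+1) = Nat.fib (m+1) * psi + Nat.fib m := by
  intro m
  induction m with
  | zero => simp
  | succ m ih =>
    have : psi ^ (m+2) = psi ^ (m+1) * psi := by ring
    rw [this, ih, Nat.fib_add_two]
    push_cast
    nlinarith [psi_sq]

lemma Yw_succ {k : ℕ} (a : Fin (k+1) → ℕ) :
    Yw a = (a 0 : ℝ) * psi ^ (k + 2) + Yw (a ∘ Fin.succ) := by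
  rw [Yw, Fin.sum_univ_succ]
  congr 1
  rw [Yw]
  refine Finset.sum_congr rfl fun i _ => ?_
  have h : (k + 1) + 1 - ((i : ℕ) + 1) = k + 1 - (i:ℕ) := by omega
  simp [Function.comp, Fin.val_succ, h]

lemma Yw_bound : ∀ (k : ℕ) (a : Fin k → ℕ), IsBin a →
    -(1/phi^2) + (1/phi)^(k+2 - k%2) ≤ Yw a ∧ Yw a ≤ 1/phi - (1/phi)^(k+1 + k%2) := by
  intro k
  induction k with
  | zero =>
    intro a _
    have h0 : Yw a = 0 := by simp [Yw]
    have h1 : ((1:ℝ)/phi)^2 = 1/phi^2 := by rw [div_pow]; norm_num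
    rw [h0]
    norm_num [h1]
  | succ k ih =>
    intro a ha
    have ha' : IsBin (a ∘ Fin.succ) := fun i => ha i.succ
    obtain ⟨ih1, ih2⟩ := ih _ ha'
    rw [Yw_succ]
    have ha0 : (a 0 : ℝ) ≤ 1 := by exact_mod_cast ha 0
    have ha0' : (0:ℝ) ≤ (a 0 : ℝ) := Nat.cast_nonneg _
    have hr0 : (0:ℝ) < 1/phi := qpos
    have hrr : ((1:ℝ)/phi)^2 = 1 - 1/phi := by
      have h := phi_pos
      field_simp
      nlinarith [phi_sq]
    have hpsi : psi = -(1/phi) := psi_eq_neg_inv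
    have key : ((1:ℝ)/phi)^(k+3) = (1/phi)^(k+1) - (1/phi)^(k+2) := by
      calc ((1:ℝ)/phi)^(k+3) = (1/phi)^(k+1) * (1/phi)^2 := by ring
        _ = (1/phi)^(k+1) * (1 - 1/phi) := by rw [hrr]
        _ = (1/phi)^(k+1) - (1/phi)^(k+2) := by ring
    have hq : (0:ℝ) ≤ (1/phi)^(k+2) := by positivity
    rcases Nat.even_or_odd k with he | ho
    · have hk2 : k % 2 = 0 := Nat.even_iff.mp he
      have e1 : k + 1 + 2 - (k+1) % 2 = k + 2 := by omega
      have e2 : k + 1 + 1 + (k+1) % 2 = k + 3 := by omega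
      have e3 : k + 2 - k % 2 = k + 2 := by omega
      have e4 : k + 1 + k % 2 = k + 1 := by omega
      rw [e1, e2]; rw [e3] at ih1; rw [e4] at ih2
      have hpow : psi ^ (k+2) = (1/phi)^(k+2) := by
        rw [hpsi]; exact (Nat.even_iff.mpr (by omega)).neg_pow _
      have tb1 : (0:ℝ) ≤ (a 0 : ℝ) * psi ^ (k+2) := by
        rw [hpow]; exact mul_nonneg ha0' hq
      have tb2 : (a 0 : ℝ) * psi ^ (k+2) ≤ (1/phi)^(k+2) := by
        rw [hpow]; exact mul_le_of_le_one_left hq ha0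
      constructor
      · linarith
      · linarith
    · have hk2 : k % 2 = 1 := Nat.odd_iff.mp ho
      have e1 : k + 1 + 2 - (k+1) % 2 = k + 3 := by omega
      have e2 : k + 1 + 1 + (k+1) % 2 = k + 2 := by omega
      have e3 : k + 2 - k % 2 = k + 1 := by omega
      have e4 : k + 1 + k % 2 = k + 2 := by omega
      rw [e1, e2]; rw [e3] at ih1; rw [e4] at ih2
      have hpow : psi ^ (k+2) = -((1/phi)^(k+2)) := by
        rw [hpsi]; exact (Nat.odd_iff.mpr (by omega)).neg_pow _
      have tb1 : -((1/phi)^(k+2)) ≤ (a 0 : ℝ) * psi ^ (k+2) := by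
        rw [hpow]
        have := mul_le_of_le_one_left hq ha0
        nlinarith
      have tb2 : (a 0 : ℝ) * psi ^ (k+2) ≤ 0 := by
        rw [hpow]
        nlinarith
      constructor
      · linarith
      · linarith


lemma Titer (n : ℕ) : (-(1/phi^2) ≤ T^[n] 0 ∧ T^[n] 0 < 1/phi) ∧
    ∃ j : ℤ, T^[n] 0 = n * (1/phi^2) - j := by
  induction n with
  | zero =>
    simp only [Function.iterate_zero, id_eq]
    refine ⟨⟨by linarith [q2pos], qpos⟩, 0, by simp⟩
  | succ n ih =>
    obtain ⟨⟨hlo, hhi⟩, j, hj⟩ := ih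
    rw [Function.iterate_succ_apply']
    have hq3 := q3
    have hq2 := q2
    have h2p := q2pos
    have h1p := qpos
    rw [T]
    split_ifs with h
    · refine ⟨⟨by linarith, by linarith⟩, j, by push_cast; linarith⟩
    · refine ⟨⟨by linarith, by linarith⟩, j + 1, by push_cast; linarith⟩



/-- for every n ≥ 0, x_n − y_n = √5·n, the number x_n − nφ = y_n − nψ is an
integer, y_n ∈ [−1/φ², 1/φ), and consequently y_n = T^n(0). -/
theorem stmt_5 (n : ℕ) (x y : ℝ) (hxy : IsXY n x y) :
    x - y = Real.sqrt 5 * n ∧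
    (∃ m : ℤ, x - n * phi = m ∧ y - n * psi = m) ∧
    y ∈ Set.Ico (-(1 / phi ^ 2)) (1 / phi) ∧
    y = T^[n] 0 := by
  have hxy' : ∃ (k : ℕ) (b : Fin k → ℕ), IsZeck n b ∧ x = Xw b ∧ y = Yw b := by
    rcases hxy with ⟨hn, hx, hy⟩ | h
    · exact ⟨0, fun i => 0, ⟨fun i => i.elim0, fun h => absurd h (lt_irrefl 0),
        fun i j _ => i.elim0, by simp [Nw, hn]⟩, by simp [Xw, hx], by simp [Yw, hy]⟩
    · exact h
  obtain ⟨k, b, ⟨hbin, -, -, hN⟩, hx, hy⟩ := hxy'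
  subst hx hy
  subst hN
  have key : ∀ i : Fin k, ∃ m : ℕ, k + 1 - (i:ℕ) = m + 2 ∧ k - (i:ℕ) = m + 1 :=
    fun i => ⟨k - 1 - (i:ℕ), by omega, by omega⟩
  -- Part A : x - y = √5 n
  have partA : Xw b - Yw b = Real.sqrt 5 * (Nw b : ℝ) := by
    rw [Xw, Yw, Nw]
    push_cast
    rw [← Finset.sum_sub_distrib, Finset.mul_sum]
    refine Finset.sum_congr rfl fun i _ => ?_
    obtain ⟨m, hm1, -⟩ := key i
    rw [hm1]
    have hd : phi ^ (m+2) - psi ^ (m+2) = Real.sqrt 5 * (Nat.fib (m+2) : ℝ) := by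
      rw [show m + 2 = (m+1)+1 from rfl, phi_pow, psi_pow, ← phi_sub_psi]
      ring
    calc (b i : ℝ) * phi ^ (m+2) - (b i : ℝ) * psi ^ (m+2)
        = (b i : ℝ) * (phi ^ (m+2) - psi ^ (m+2)) := by ring
      _ = Real.sqrt 5 * ((b i : ℝ) * (Nat.fib (m+2) : ℝ)) := by rw [hd]; ring
  -- Part B : the integer
  set M : ℕ := ∑ i : Fin k, b i * Nat.fib (k - (i:ℕ)) with hM
  have partBx : Xw b - (Nw b : ℝ) * phi = (M : ℝ) := by
    rw [Xw, Nw, hM]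
    push_cast
    rw [Finset.sum_mul, ← Finset.sum_sub_distrib]
    refine Finset.sum_congr rfl fun i _ => ?_
    obtain ⟨m, hm1, hm2⟩ := key i
    rw [hm1, hm2, show m + 2 = (m+1)+1 from rfl, phi_pow]
    ring
  have partBy : Yw b - (Nw b : ℝ) * psi = (M : ℝ) := by
    rw [Yw, Nw, hM]
    push_cast
    rw [Finset.sum_mul, ← Finset.sum_sub_distrib]
    refine Finset.sum_congr rfl fun i _ => ?_
    obtain ⟨m, hm1, hm2⟩ := key i
    rw [hm1, hm2, show m + 2 = (m+1)+1 from rfl, psi_pow]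
    ring
  -- Part C : bounds on y
  obtain ⟨hlo, hhi⟩ := Yw_bound k b hbin
  have hp1 : (0:ℝ) < (1/phi)^(k+2 - k%2) := pow_pos qpos _
  have hp2 : (0:ℝ) < (1/phi)^(k+1 + k%2) := pow_pos qpos _
  have hylo : -(1/phi^2) ≤ Yw b := by linarith
  have hyhi : Yw b < 1/phi := by linarith
  -- Part D : y = T^[n] 0
  obtain ⟨⟨hTlo, hThi⟩, j, hj⟩ := Titer (Nw b)
  have hpsi2 : (Nw b : ℝ) * psi - (Nw b : ℝ) * (1/phi^2) = -(Nw b : ℝ) := by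
    rw [psi_eq, inv_sq]; ring
  have hdiff : Yw b - T^[Nw b] 0 = (((M:ℤ) + j - (Nw b : ℤ) : ℤ) : ℝ) := by
    push_cast
    linarith [partBy, hj, hpsi2]
  have hq2 := q2
  have hzr : (-1:ℝ) < (((M:ℤ) + j - (Nw b : ℤ) : ℤ) : ℝ) := by
    rw [← hdiff]; linarith
  have hzl : ((((M:ℤ) + j - (Nw b : ℤ) : ℤ) : ℝ)) < 1 := by
    rw [← hdiff]; linarith
  have hz : ((M:ℤ) + j - (Nw b : ℤ) : ℤ) = 0 := by
    have h1 : (-1:ℤ) < (M:ℤ) + j - (Nw b : ℤ) := by exact_mod_cast hzr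
    have h2 : (M:ℤ) + j - (Nw b : ℤ) < 1 := by exact_mod_cast hzl
    omega
  rw [hz] at hdiff
  refine ⟨partA, ⟨(M:ℤ), by push_cast; linarith [partBx], by push_cast; linarith [partBy]⟩,
    ⟨hylo, hyhi⟩, by push_cast at hdiff; linarith [hdiff]⟩

end
end

section
/- Let n ≥ 1 have Zeckendorf word b_1⋯b_k. Then R(n) equals the (1,1) entry of the matrix product A_{b_1}·A_{b_2}·⋯·A_{b_k}, i.e. R(n) = (1 0 0)·A_{b_1}⋯A_{b_k}·(1,0,0)^T. -/
open Real Finset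

noncomputable section

/-- The matrix A₁ with rows (1,0,1), (0,0,1), (0,0,0). -/
def A1 : Matrix (Fin 3) (Fin 3) ℕ := !![1, 0, 1; 0, 0, 1; 0, 0, 0]

/-- The matrix A₀ with rows (1,0,0), (1,0,1), (0,1,0). -/
def A0 : Matrix (Fin 3) (Fin 3) ℕ := !![1, 0, 0; 1, 0, 1; 0, 1, 0]

/-- The ordered product A_{b_1}·A_{b_2}·⋯·A_{b_k} along a word b. -/
def Aprod {k : ℕ} (b : Fin k → ℕ) : Matrix (Fin 3) (Fin 3) ℕ :=
  (List.ofFn fun i : Fin k => if b i = 1 then A1 else A0).prod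


/-! ### Auxiliary definitions for the proof -/

/-- List version of `Nw`. -/
def nwL : List ℕ → ℕ
  | [] => 0
  | x :: t => x * Nat.fib (t.length + 2) + nwL t

/-- `cnt k n` is the number of binary words of length `k` with `nwL` value `n`. -/
def cnt : ℕ → ℕ → ℕ
  | 0, n => if n = 0 then 1 else 0
  | (k+1), n => cnt k n + (if Nat.fib (k+2) ≤ n then cnt k (n - Nat.fib (k+2)) else 0)

lemma cnt_succ (k n : ℕ) :
    cnt (k+1) n = cnt k n + (if Nat.fib (k+2) ≤ n then cnt k (n - Nat.fib (k+2)) else 0) := rfl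

/-- List version of `Aprod`. -/
def aprodL (l : List ℕ) : Matrix (Fin 3) (Fin 3) ℕ :=
  (l.map fun x => if x = 1 then A1 else A0).prod

/-- Target offsets of the three automaton states for a word of length `k`. -/
def tgt (k : ℕ) : Fin 3 → ℕ
  | 0 => 0
  | 1 => Nat.fib (k+1)
  | 2 => Nat.fib (k+2)

lemma cnt_eq_zero : ∀ (k m : ℕ), Nat.fib (k+3) ≤ m + 1 → cnt k m = 0 := by
  intro k
  induction k with
  | zero =>
    intro m h
    simp only [cnt]
    have : m ≠ 0 := by
      intro h0; subst h0; simp [Nat.fib] at h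
    simp [this]
  | succ k ih =>
    intro m h
    have h1 : Nat.fib (k+3) ≤ m + 1 := le_trans (Nat.fib_mono (by omega)) h
    simp only [cnt, ih m h1]
    split
    · rename_i hle
      rw [ih]
      have hfib : Nat.fib (k+1+3) = Nat.fib (k+3) + Nat.fib (k+2) := by
        rw [show k+1+3 = (k+2)+2 from rfl, Nat.fib_add_two,
          show k+2+1 = k+3 from rfl]; omega
      omega
    · rfl

lemma nwL_lt (l : List ℕ) (hb : ∀ x ∈ l, x ≤ 1) (hc : l.Chain' (fun x y => x * y = 0)) :
    nwL l < Nat.fib (l.length + 2) ∧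
      ((∀ h : l ≠ [], l.head h = 0) → nwL l < Nat.fib (l.length + 1)) := by
  induction l with
  | nil => simp [nwL, Nat.fib]
  | cons x t ih =>
    have hbt : ∀ y ∈ t, y ≤ 1 := fun y hy => hb y (List.mem_cons_of_mem _ hy)
    have hct : t.Chain' (fun x y => x * y = 0) := hc.tail
    obtain ⟨h1, h2⟩ := ih hbt hct
    have hx : x ≤ 1 := hb x List.mem_cons_self
    rcases Nat.le_one_iff_eq_zero_or_eq_one.mp hx with hx0 | hx1
    · subst hx0
      constructor
      · simp only [nwL, List.length_cons, zero_mul, zero_add]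
        exact lt_of_lt_of_le h1 (Nat.fib_mono (by omega))
      · intro _
        simp only [nwL, List.length_cons, zero_mul, zero_add]
        exact lt_of_lt_of_le h1 (Nat.fib_mono (by omega))
    · subst hx1
      have ht : nwL t < Nat.fib (t.length + 1) := by
        cases t with
        | nil => simp [nwL, Nat.fib]
        | cons y t' =>
          apply h2
          intro _
          have := List.isChain_cons_cons.mp hc |>.1
          simpa using this
      constructor
      · simp only [nwL, List.length_cons, one_mul]
        have hfib : Nat.fib (t.length + 1 + 2) = Nat.fib (t.length + 2) + Nat.fib (t.length + 1) := by
          rw [show t.length + 1 + 2 = (t.length + 1) + 2 from rfl, Nat.fib_add_two,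
            show t.length + 1 + 1 = t.length + 2 from rfl]; omega
        omega
      · intro hh
        exfalso
        have := hh (by simp)
        simp at this

lemma main_lemma (l : List ℕ) (hb : ∀ x ∈ l, x ≤ 1) (hc : l.Chain' (fun x y => x * y = 0))
    (s : Fin 3) : aprodL l s 0 = cnt l.length (tgt l.length s + nwL l) := by
  induction l generalizing s with
  | nil =>
    fin_cases s <;> simp [aprodL, nwL, tgt, cnt, Matrix.one_apply, Nat.fib]
  | cons x t ih =>
    have hbt : ∀ y ∈ t, y ≤ 1 := fun y hy => hb y (List.mem_cons_of_mem _ hy)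
    have hct : t.Chain' (fun x y => x * y = 0) := hc.tail
    have IH := ih hbt hct
    have P00 := IH 0
    have P10 := IH 1
    have P20 := IH 2
    simp only [tgt, zero_add] at P00 P10 P20
    have hx : x ≤ 1 := hb x List.mem_cons_self
    have hstep : aprodL (x :: t) = (if x = 1 then A1 else A0) * aprodL t := by
      simp [aprodL]
    set m := t.length with hm
    set u := nwL t with hu
    set P := aprodL t with hP
    have hf3 : Nat.fib (m+3) = Nat.fib (m+2) + Nat.fib (m+1) := by
      rw [show m+3 = (m+1)+2 from rfl, Nat.fib_add_two, show m+1+1 = m+2 from rfl]; omega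
    have hf21 : Nat.fib (m+1) ≤ Nat.fib (m+2) := Nat.fib_mono (by omega)
    have hfpos : 0 < Nat.fib (m+2) := Nat.fib_pos.2 (by omega)
    have hulw : u < Nat.fib (m+2) := (nwL_lt t hbt hct).1
    have hlen : (x :: t).length = m + 1 := by simp [hm]
    have hnw : nwL (x :: t) = x * Nat.fib (m+2) + u := rfl
    have L0 : (A0 * P) 0 0 = P 0 0 := by
      rw [Matrix.mul_apply, Fin.sum_univ_three]; simp [A0]
    have L1 : (A0 * P) 1 0 = P 0 0 + P 2 0 := by
      rw [Matrix.mul_apply, Fin.sum_univ_three]; simp [A0]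
    have L2 : (A0 * P) 2 0 = P 1 0 := by
      rw [Matrix.mul_apply, Fin.sum_univ_three]; simp [A0]
    have M0 : (A1 * P) 0 0 = P 0 0 + P 2 0 := by
      rw [Matrix.mul_apply, Fin.sum_univ_three]; simp [A1]
    have M1 : (A1 * P) 1 0 = P 2 0 := by
      rw [Matrix.mul_apply, Fin.sum_univ_three]; simp [A1]
    have M2 : (A1 * P) 2 0 = 0 := by
      rw [Matrix.mul_apply, Fin.sum_univ_three]
      simp [show A1 2 0 = 0 from rfl, show A1 2 1 = 0 from rfl, show A1 2 2 = 0 from rfl]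
    have dead1 : cnt m (Nat.fib (m+2) + Nat.fib (m+2) + u) = 0 :=
      cnt_eq_zero _ _ (by omega)
    have dead2 : ∀ c : ℕ, cnt m (Nat.fib (m+3) + c) = 0 := fun c =>
      cnt_eq_zero _ _ (by omega)
    rw [hstep, hlen, hnw]
    rcases Nat.le_one_iff_eq_zero_or_eq_one.mp hx with h0 | h1
    · subst h0
      rw [if_neg (by norm_num)]
      fin_cases s
      · show (A0 * P) 0 0 = cnt (m+1) (tgt (m+1) 0 + (0 * Nat.fib (m+2) + u))
        rw [L0, P00]
        simp only [tgt, zero_mul, zero_add]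
        rw [cnt_succ, if_neg (by omega)]
        omega
      · show (A0 * P) 1 0 = cnt (m+1) (tgt (m+1) 1 + (0 * Nat.fib (m+2) + u))
        rw [L1, P00, P20]
        simp only [tgt, zero_mul, zero_add, show m+1+1 = m+2 from rfl]
        rw [cnt_succ, if_pos (by omega),
          show Nat.fib (m+2) + u - Nat.fib (m+2) = u from by omega]
        omega
      · show (A0 * P) 2 0 = cnt (m+1) (tgt (m+1) 2 + (0 * Nat.fib (m+2) + u))
        rw [L2, P10]
        simp only [tgt, zero_mul, zero_add, show m+1+2 = m+3 from rfl]
        rw [cnt_succ, if_pos (by omega),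
          show Nat.fib (m+3) + u - Nat.fib (m+2) = Nat.fib (m+1) + u from by omega,
          dead2]
        omega
    · subst h1
      rw [if_pos rfl]
      fin_cases s
      · show (A1 * P) 0 0 = cnt (m+1) (tgt (m+1) 0 + (1 * Nat.fib (m+2) + u))
        rw [M0, P00, P20]
        simp only [tgt, one_mul, zero_add]
        rw [cnt_succ, if_pos (by omega),
          show Nat.fib (m+2) + u - Nat.fib (m+2) = u from by omega]
        omega
      · show (A1 * P) 1 0 = cnt (m+1) (tgt (m+1) 1 + (1 * Nat.fib (m+2) + u))
        rw [M1, P20]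
        simp only [tgt, one_mul, show m+1+1 = m+2 from rfl]
        rw [cnt_succ, if_pos (by omega),
          show Nat.fib (m+2) + (Nat.fib (m+2) + u) - Nat.fib (m+2) = Nat.fib (m+2) + u
            from by omega,
          show Nat.fib (m+2) + (Nat.fib (m+2) + u) = Nat.fib (m+2) + Nat.fib (m+2) + u
            from by omega,
          dead1]
        omega
      · show (A1 * P) 2 0 = cnt (m+1) (tgt (m+1) 2 + (1 * Nat.fib (m+2) + u))
        rw [M2]
        simp only [tgt, one_mul, show m+1+2 = m+3 from rfl]
        rw [cnt_succ, if_pos (by omega),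
          show Nat.fib (m+3) + (Nat.fib (m+2) + u) - Nat.fib (m+2) = Nat.fib (m+3) + u
            from by omega]
        rw [dead2, dead2]

lemma card_filter_eq_cnt (k : ℕ) : ∀ n : ℕ,
    (((Finset.Icc 2 (k+1)).powerset).filter fun S => ∑ i ∈ S, Nat.fib i = n).card = cnt k n := by
  induction k with
  | zero =>
    intro n
    have : Finset.Icc 2 1 = (∅ : Finset ℕ) := by decide
    rw [this]
    simp only [Finset.powerset_empty, cnt]
    by_cases h : n = 0
    · subst h
      rw [if_pos rfl, Finset.filter_singleton, if_pos (by simp)]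
      simp
    · rw [if_neg h]
      rw [Finset.filter_singleton, if_neg (by simpa using fun hh => h hh.symm)]
      simp
  | succ k ih =>
    intro n
    have hins : Finset.Icc 2 (k+1+1) = insert (k+2) (Finset.Icc 2 (k+1)) := by
      rw [show k+1+1 = k+2 from rfl]
      ext x; simp [Finset.mem_Icc, Finset.mem_insert]; omega
    have ha : (k+2) ∉ Finset.Icc 2 (k+1) := by simp
    rw [hins, Finset.powerset_insert, Finset.filter_union]
    rw [Finset.card_union_of_disjoint]
    · congr 1
      · exact ih n
      · rw [Finset.filter_image]
        rw [Finset.card_image_of_injOn]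
        · have hcongr : ∀ S ∈ (Finset.Icc 2 (k+1)).powerset,
              (∑ i ∈ insert (k+2) S, Nat.fib i = n) ↔
                (Nat.fib (k+2) ≤ n ∧ ∑ i ∈ S, Nat.fib i = n - Nat.fib (k+2)) := by
            intro S hS
            have haS : (k+2) ∉ S := fun h =>
              ha (Finset.mem_powerset.mp hS h)
            rw [Finset.sum_insert haS]
            constructor
            · intro h; omega
            · intro ⟨h1, h2⟩; omega
          rw [Finset.filter_congr hcongr]
          by_cases hle : Nat.fib (k+2) ≤ n
          · rw [if_pos hle, ← ih (n - Nat.fib (k+2))]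
            congr 1
            apply Finset.filter_congr
            intro S _
            simp [hle]
          · rw [if_neg hle]
            rw [Finset.filter_false_of_mem, Finset.card_empty]
            intro S _
            simp only [not_and]
            intro h; exact absurd h hle
        · intro S hS T hT hST
          simp only [Finset.coe_filter, Set.mem_setOf_eq] at hS hT
          have hS' : (k+2) ∉ S := fun h => ha (Finset.mem_powerset.mp hS.1 h)
          have hT' : (k+2) ∉ T := fun h => ha (Finset.mem_powerset.mp hT.1 h)
          have := congrArg (fun X => Finset.erase X (k+2)) hST
          simpa [Finset.erase_insert, hS', hT'] using this
    · apply Finset.disjoint_left.mpr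
      intro S hS1 hS2
      simp only [Finset.mem_filter, Finset.mem_image] at hS1 hS2
      obtain ⟨T, hT, rfl⟩ := hS2.1
      exact ha (Finset.mem_powerset.mp hS1.1 (Finset.mem_insert_self _ _))

lemma R_eq_cnt (k n : ℕ) (hn : n < Nat.fib (k+2)) : R n = cnt k n := by
  rw [← card_filter_eq_cnt, R]
  have key : ∀ S : Finset ℕ,
      ((∀ i ∈ S, 2 ≤ i) ∧ ∑ i ∈ S, Nat.fib i = n) ↔
        S ∈ ((Finset.Icc 2 (k+1)).powerset).filter fun S => ∑ i ∈ S, Nat.fib i = n := by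
    intro S
    simp only [Finset.mem_filter, Finset.mem_powerset]
    constructor
    · rintro ⟨h2, hsum⟩
      refine ⟨fun i hi => Finset.mem_Icc.mpr ⟨h2 i hi, ?_⟩, hsum⟩
      by_contra hik
      push_neg at hik
      have h1 : Nat.fib (k+2) ≤ Nat.fib i := Nat.fib_mono (by omega)
      have h2' : Nat.fib i ≤ ∑ j ∈ S, Nat.fib j :=
        Finset.single_le_sum (fun j _ => Nat.zero_le _) hi
      omega
    · rintro ⟨hsub, hsum⟩
      exact ⟨fun i hi => (Finset.mem_Icc.mp (hsub hi)).1, hsum⟩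
  rw [Nat.card_congr (Equiv.subtypeEquivRight key)]
  rw [Nat.card_eq_fintype_card, Fintype.card_coe]

lemma nwL_ofFn : ∀ {k : ℕ} (b : Fin k → ℕ), nwL (List.ofFn b) = Nw b := by
  intro k
  induction k with
  | zero => intro b; simp [nwL, Nw]
  | succ k ih =>
    intro b
    rw [List.ofFn_succ]
    show b 0 * Nat.fib ((List.ofFn fun i : Fin k => b i.succ).length + 2) + nwL _ = _
    rw [List.length_ofFn, ih]
    conv_rhs => rw [Nw, Fin.sum_univ_succ]
    congr 1
    rw [Nw]
    apply Finset.sum_congr rfl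
    intro i _
    have hlt : (i : ℕ) < k := i.isLt
    simp only [Fin.val_succ]
    congr 2
    omega

/-- if n ≥ 1 has Zeckendorf word b_1⋯b_k then R(n) is the (1,1) entry of
A_{b_1}⋯A_{b_k}. -/
theorem stmt_7 (n : ℕ) (hn : 1 ≤ n) {k : ℕ} (b : Fin k → ℕ) (hb : IsZeck n b) :
    R n = Aprod b 0 0 := by
  obtain ⟨hbin, _hhead, hcons, hNw⟩ := hb
  have hlen : (List.ofFn b).length = k := by simp
  have hbl : ∀ x ∈ List.ofFn b, x ≤ 1 := by
    intro x hx
    rw [List.mem_ofFn] at hx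
    obtain ⟨i, rfl⟩ := hx
    exact hbin i
  have hcl : (List.ofFn b).Chain' (fun x y => x * y = 0) := by
    apply List.isChain_iff_getElem.mpr
    intro i hi
    simp only [List.getElem_ofFn]
    apply hcons
    simp
  have hnwl : nwL (List.ofFn b) = n := by rw [nwL_ofFn, hNw]
  have hAprod : Aprod b = aprodL (List.ofFn b) := by
    rw [Aprod, aprodL, List.map_ofFn]
    rfl
  have hmain := main_lemma (List.ofFn b) hbl hcl 0
  rw [hlen, hnwl] at hmain
  simp only [tgt, zero_add] at hmain
  have hbound : n < Nat.fib (k+2) := by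
    have := (nwL_lt (List.ofFn b) hbl hcl).1
    rw [hlen, hnwl] at this
    exact this
  rw [R_eq_cnt k n hbound, hAprod, hmain]

end
end

section
/- Let n ≥ 1 have Zeckendorf word b_1⋯b_k with b_k = 0, and let m = ∑_{i=1}^k b_i F_{k+3−i} + 1 (the integer whose Zeckendorf word is b_1⋯b_k 1). If y_n < 0 then R(m) = R(n) and R(m−1) = R(n) + R(n−1); if 0 < y_n < 1/φ³ then R(m) = R(n) and R(m−1) = R(n). -/
open Real Finset

noncomputable section

namespace S11



def cnt (o j t : ℕ) : ℕ :=
  ((Icc 2 j).powerset.filter (fun S => (∑ i ∈ S, Nat.fib i) + o = t)).card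

lemma Icc_succ (j : ℕ) (hj : 1 ≤ j) : Icc 2 (j+1) = insert (j+1) (Icc 2 j) := by
  ext x; simp only [mem_Icc, mem_insert]; omega

lemma cnt_one (o t : ℕ) : cnt o 1 t = if o = t then 1 else 0 := by
  have h : Icc 2 1 = (∅ : Finset ℕ) := Finset.Icc_eq_empty (by omega)
  simp only [cnt, h, Finset.powerset_empty, Finset.filter_singleton, Finset.sum_empty, zero_add]
  split <;> simp

lemma sum_fib_le {j : ℕ} (hj : 1 ≤ j) {S : Finset ℕ} (hS : S ⊆ Icc 2 j) :
    (∑ i ∈ S, Nat.fib i) + 2 ≤ Nat.fib (j+2) := by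
  have h1 : (∑ i ∈ S, Nat.fib i) ≤ ∑ i ∈ Icc 2 j, Nat.fib i :=
    Finset.sum_le_sum_of_subset hS
  have h2 : ∀ j, 1 ≤ j → (∑ i ∈ Icc 2 j, Nat.fib i) + 2 = Nat.fib (j+2) := by
    intro j hj
    induction j, hj using Nat.le_induction with
    | base =>
        simp only [(Finset.Icc_eq_empty (show ¬(2:ℕ) ≤ 1 by omega)),
          Finset.sum_empty, zero_add]
        decide
    | succ j hj ih =>
      rw [Icc_succ j hj, Finset.sum_insert (by simp [mem_Icc])]
      have h4 := Nat.fib_add_two (n := j+1)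
      have h5 : Nat.fib (j+1+1) = Nat.fib (j+2) := by norm_num
      omega
  have := h2 j hj
  omega

lemma cnt_lt {o j t : ℕ} (h : t < o) : cnt o j t = 0 := by
  rw [cnt, Finset.card_eq_zero, Finset.filter_eq_empty_iff]
  intro S _
  omega

lemma cnt_big {o j t : ℕ} (hj : 1 ≤ j) (h : Nat.fib (j+2) + o < t + 2) : cnt o j t = 0 := by
  rw [cnt, Finset.card_eq_zero, Finset.filter_eq_empty_iff]
  intro S hS
  have := sum_fib_le hj (Finset.mem_powerset.mp hS)
  omega

lemma cnt_shift (o d j t : ℕ) : cnt (o + d) j (t + d) = cnt o j t := by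
  rw [cnt, cnt]
  congr 1
  apply Finset.filter_congr
  intro S _
  constructor <;> intro h <;> omega

lemma cnt_succ (o j t : ℕ) (hj : 1 ≤ j) :
    cnt o (j+1) t = cnt o j t + cnt (o + Nat.fib (j+1)) j t := by
  have hnm : (j+1) ∉ Icc 2 j := by simp [mem_Icc]
  rw [cnt, Icc_succ j hj, Finset.powerset_insert, Finset.filter_union]
  rw [Finset.card_union_of_disjoint]
  · congr 1
    rw [Finset.filter_image]
    rw [Finset.card_image_of_injOn]
    · rw [cnt]
      congr 1
      apply Finset.filter_congr
      intro S hS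
      have hni : (j+1) ∉ S := fun hc => hnm (Finset.mem_powerset.mp hS hc)
      rw [Finset.sum_insert hni]
      constructor <;> intro h <;> omega
    · intro S hS T hT hST
      simp only [Finset.coe_filter, Set.mem_setOf_eq] at hS hT
      have hS' : (j+1) ∉ S := fun hc => hnm (Finset.mem_powerset.mp hS.1 hc)
      have hT' : (j+1) ∉ T := fun hc => hnm (Finset.mem_powerset.mp hT.1 hc)
      have : (insert (j+1) S).erase (j+1) = (insert (j+1) T).erase (j+1) := by rw [hST]
      rwa [Finset.erase_insert hS', Finset.erase_insert hT'] at this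
  · rw [Finset.disjoint_left]
    intro S hS hS2
    simp only [Finset.mem_filter, Finset.mem_powerset, Finset.mem_image] at hS hS2
    obtain ⟨T, hT, rfl⟩ := hS2.1
    exact hnm (hS.1 (Finset.mem_insert_self _ _))




def vd (z : ℕ → ℕ) (j : ℕ) : ℕ := ∑ i ∈ Icc 2 j, z i * Nat.fib i

lemma vd_one (z : ℕ → ℕ) : vd z 1 = 0 := by
  simp [vd, Finset.Icc_eq_empty (show ¬(2:ℕ) ≤ 1 by omega)]

lemma vd_succ (z : ℕ → ℕ) (j : ℕ) (hj : 1 ≤ j) :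
    vd z (j+1) = vd z j + z (j+1) * Nat.fib (j+1) := by
  rw [vd, Icc_succ j hj, Finset.sum_insert (by simp [mem_Icc]), vd]
  omega

lemma vd_lt (z : ℕ → ℕ) (h1 : ∀ i, z i ≤ 1) (h2 : ∀ i, z i * z (i+1) = 0) :
    ∀ j, 1 ≤ j → vd z j < Nat.fib (j+1) ∧ (z (j+1) = 1 → vd z j < Nat.fib j) := by
  intro j hj
  induction j, hj using Nat.le_induction with
  | base => rw [vd_one]; exact ⟨by decide, fun _ => by decide⟩
  | succ j hj ih =>
    have hf : Nat.fib (j+1+1) = Nat.fib (j+2) := by norm_num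
    have hfib := Nat.fib_add_two (n := j)
    have hfibm : Nat.fib j ≤ Nat.fib (j+1) := Nat.fib_le_fib_succ
    have hd := h1 (j+1)
    rw [vd_succ z j hj]
    rcases Nat.le_one_iff_eq_zero_or_eq_one.mp hd with h | h
    · rw [h]
      refine ⟨by simpa [hf] using lt_of_lt_of_le ih.1 (by omega), fun _ => by simpa using ih.1⟩
    · rw [h]
      have h3 := ih.2 h
      constructor
      · simp only [hf]; omega
      · intro hc
        have := h2 (j+1)
        rw [h, hc] at this
        omega

def step (d : ℕ) (s : ℕ × ℕ × ℕ) : ℕ × ℕ × ℕ :=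
  if d = 1 then (s.1 + s.2.2, s.2.2, 0) else (s.1, s.1 + s.2.2, s.2.1)

def T3 (z : ℕ → ℕ) (o j : ℕ) : ℕ × ℕ × ℕ :=
  (cnt o j (vd z j), cnt o j (vd z j + Nat.fib j), cnt o j (vd z j + Nat.fib (j+1)))

lemma step_add (d : ℕ) (a b : ℕ × ℕ × ℕ) : step d (a + b) = step d a + step d b := by
  rcases a with ⟨a1, a2, a3⟩; rcases b with ⟨b1, b2, b3⟩
  by_cases hd : d = 1 <;>
    simp [step, hd, Prod.ext_iff] <;> omega

lemma T3_succ (z : ℕ → ℕ) (o j : ℕ) (h1 : ∀ i, z i ≤ 1) (h2 : ∀ i, z i * z (i+1) = 0)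
    (hj : 1 ≤ j) (ho : o ≤ 1) :
    T3 z o (j+1) = step (z (j+1)) (T3 z o j) := by
  obtain ⟨hV, -⟩ := vd_lt z h1 h2 j hj
  have hf : Nat.fib (j+1+1) = Nat.fib (j+2) := by norm_num
  have hfib : Nat.fib (j+2) = Nat.fib j + Nat.fib (j+1) := Nat.fib_add_two
  have hfibm : Nat.fib j ≤ Nat.fib (j+1) := Nat.fib_le_fib_succ
  have hfpos : 0 < Nat.fib (j+1) := Nat.fib_pos.mpr (by omega)
  set V := vd z j with hVdef
  set F := Nat.fib (j+1) with hFdef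
  rcases Nat.le_one_iff_eq_zero_or_eq_one.mp (h1 (j+1)) with hz | hz
  · have hvd : vd z (j+1) = V := by rw [vd_succ z j hj, hz]; omega
    have e1 : cnt o (j+1) V = cnt o j V := by
      rw [cnt_succ _ _ _ hj, cnt_lt (show V < o + F by omega), add_zero]
    have e2 : cnt o (j+1) (V + F) = cnt o j V + cnt o j (V + F) := by
      rw [cnt_succ _ _ _ hj, cnt_shift o F j V, add_comm]
    have e3 : cnt o (j+1) (V + Nat.fib (j+2)) = cnt o j (V + Nat.fib j) := by
      rw [cnt_succ _ _ _ hj, cnt_big hj (by omega), zero_add,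
        show V + Nat.fib (j+2) = (V + Nat.fib j) + F by omega, cnt_shift]
    simp only [T3, step, hz, hvd, hf, ← hVdef, ← hFdef]
    rw [if_neg (by norm_num : ¬(0:ℕ) = 1)]
    simp only [Prod.mk.injEq]
    exact ⟨e1, e2, e3⟩
  · have hvd : vd z (j+1) = V + F := by rw [vd_succ z j hj, hz]; omega
    have e1 : cnt o (j+1) (V + F) = cnt o j V + cnt o j (V + F) := by
      rw [cnt_succ _ _ _ hj, cnt_shift o F j V, add_comm]
    have e2 : cnt o (j+1) (V + F + F) = cnt o j (V + F) := by
      rw [cnt_succ _ _ _ hj, cnt_big hj (by omega), zero_add,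
        show V + F + F = (V + F) + F by omega, cnt_shift]
    have e3 : cnt o (j+1) (V + F + Nat.fib (j+2)) = 0 := by
      rw [cnt_succ _ _ _ hj, cnt_big hj (by omega), zero_add,
        show V + F + Nat.fib (j+2) = (V + Nat.fib (j+2)) + F by omega, cnt_shift,
        cnt_big hj (by omega)]
    simp only [T3, step, hz, hvd, hf, reduceIte, ← hVdef, ← hFdef, Prod.mk.injEq]
    exact ⟨e1, e2, e3⟩

lemma T3_one (z : ℕ → ℕ) (o : ℕ) :
    T3 z o 1 = (if o = 0 then 1 else 0, if o = 1 then 1 else 0, if o = 1 then 1 else 0) := by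
  simp [T3, vd_one, cnt_one, Nat.fib_one, Nat.fib_two]

lemma cnt_two (o t : ℕ) : cnt o 2 t = (if o = t then 1 else 0) + (if o + 1 = t then 1 else 0) := by
  rw [cnt_succ o 1 t (le_refl 1), cnt_one, cnt_one, Nat.fib_two]

lemma T3_two (X : ℕ → ℕ) (c : ℕ) (hX : X 2 = c) :
    T3 X 0 2 = (cnt 0 2 c, cnt 0 2 (c+1), cnt 0 2 (c+2)) := by
  have hvd : vd X 2 = c := by
    rw [show (2:ℕ) = 1 + 1 from rfl, vd_succ X 1 (le_refl 1), vd_one]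
    simp [hX, Nat.fib_two]
  simp only [T3, hvd, Nat.fib_two, show Nat.fib 3 = 2 from rfl]




def zg (c : ℕ) (z : ℕ → ℕ) : ℕ → ℕ :=
  fun j => if j = 2 then c else if 3 ≤ j then z (j-1) else 0

lemma zg_two (c : ℕ) (z : ℕ → ℕ) : zg c z 2 = c := by simp [zg]

lemma zg_shift (c : ℕ) (z : ℕ → ℕ) (j : ℕ) (hj : 2 ≤ j) : zg c z (j+1) = z j := by
  unfold zg
  rw [if_neg (by omega), if_pos (by omega)]
  congr 1

lemma zg_le (c : ℕ) (z : ℕ → ℕ) (hc : c ≤ 1) (h1 : ∀ i, z i ≤ 1) : ∀ i, zg c z i ≤ 1 := by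
  intro i; unfold zg
  split
  · exact hc
  · split
    · exact h1 _
    · omega

lemma zg_nc (c : ℕ) (z : ℕ → ℕ) (h2 : ∀ i, z i * z (i+1) = 0) (hz20 : z 2 = 0) :
    ∀ i, zg c z i * zg c z (i+1) = 0 := by
  intro i
  rcases Nat.lt_or_ge i 2 with hi | hi
  · have : zg c z i = 0 := by unfold zg; rw [if_neg (by omega), if_neg (by omega)]
    rw [this, zero_mul]
  rcases Nat.eq_or_lt_of_le hi with hi2 | hi3
  · rw [← hi2, zg_two, zg_shift c z 2 (by omega), hz20, mul_zero]
  · have h3 : 3 ≤ i := hi3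
    rw [zg_shift c z i (by omega)]
    have : zg c z i = z (i-1) := by unfold zg; rw [if_neg (by omega), if_pos (by omega)]
    rw [this]
    have := h2 (i-1)
    rwa [show i - 1 + 1 = i by omega] at this

lemma claim1 (z : ℕ → ℕ) (hz1 : ∀ i, z i ≤ 1) (hz2 : ∀ i, z i * z (i+1) = 0) (hz20 : z 2 = 0) :
    ∀ j, 1 ≤ j → T3 (zg 1 z) 0 (j+1) = T3 z 0 j := by
  have g1 := zg_le 1 z (le_refl 1) hz1
  have g2 := zg_nc 1 z hz2 hz20
  intro j hj
  induction j, hj using Nat.le_induction with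
  | base =>
    rw [T3_two (zg 1 z) 1 (zg_two 1 z), T3_one]
    simp [cnt_two]
  | succ j hj ih =>
    rw [T3_succ (zg 1 z) 0 (j+1) g1 g2 (by omega) (by omega), zg_shift 1 z (j+1) (by omega),
      ih, ← T3_succ z 0 j hz1 hz2 (by omega) (by omega)]

lemma claimPar (z : ℕ → ℕ) (hz1 : ∀ i, z i ≤ 1) (hz2 : ∀ i, z i * z (i+1) = 0) (hz20 : z 2 = 0)
    (e : ℕ) (he3 : 3 ≤ e) (hze : z e = 1) (hzlt : ∀ i, i < e → z i = 0) :
    ∀ j, 1 ≤ j →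
      (j < e → T3 (zg 0 z) 0 (j+1) = T3 z 0 j + (if Odd j then ((0,1,0) : ℕ×ℕ×ℕ) else (0,0,1))
          ∧ T3 z 1 j = (0,1,1)) ∧
      (e ≤ j → T3 (zg 0 z) 0 (j+1) = T3 z 0 j + (if Odd e then T3 z 1 j else 0)) := by
  have g1 := zg_le 0 z (by omega) hz1
  have g2 := zg_nc 0 z hz2 hz20
  intro j hj
  induction j, hj using Nat.le_induction with
  | base =>
    constructor
    · intro _
      constructor
      · rw [T3_two (zg 0 z) 0 (zg_two 0 z), T3_one]
        simp [cnt_two]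
      · rw [T3_one]; rfl
    · intro h; omega
  | succ j hj ih =>
    constructor
    · intro hlt
      have hj1 : j < e := by omega
      obtain ⟨hA, hT1⟩ := ih.1 hj1
      have hz0 : z (j+1) = 0 := hzlt _ hlt
      constructor
      · have hstep0 : T3 z 0 (j+1) = step 0 (T3 z 0 j) := by
          rw [T3_succ z 0 j hz1 hz2 (by omega) (by omega), hz0]
        rw [T3_succ (zg 0 z) 0 (j+1) g1 g2 (by omega) (by omega), zg_shift 0 z (j+1) (by omega),
          hz0, hA, step_add, hstep0]
        congr 1
        by_cases hp : Odd j
        · rw [if_pos hp, if_neg (by simp [Nat.odd_add_one, hp])]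
          rfl
        · rw [if_neg hp, if_pos (by simp [Nat.odd_add_one, hp])]
          rfl
      · rw [T3_succ z 1 j hz1 hz2 (by omega) (by omega), hz0, hT1]
        rfl
    · intro hle
      rcases Nat.lt_or_ge j e with hlt | hge
      · have hje : j + 1 = e := by omega
        obtain ⟨hA, hT1⟩ := ih.1 hlt
        have hze' : z (j+1) = 1 := by rw [hje]; exact hze
        have hstep0 : T3 z 0 (j+1) = step 1 (T3 z 0 j) := by
          rw [T3_succ z 0 j hz1 hz2 (by omega) (by omega), hze']
        have hstep1 : T3 z 1 (j+1) = step 1 (T3 z 1 j) := by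
          rw [T3_succ z 1 j hz1 hz2 (by omega) (by omega), hze']
        rw [T3_succ (zg 0 z) 0 (j+1) g1 g2 (by omega) (by omega), zg_shift 0 z (j+1) (by omega),
          hze', hA, step_add, hstep0]
        by_cases hp : Odd e
        · have hpj : ¬ Odd j := by
            rw [← hje] at hp
            simpa [Nat.odd_add_one] using hp
          rw [if_neg hpj, if_pos hp, hstep1, hT1]
          rfl
        · have hpj : Odd j := by
            rw [← hje] at hp
            simpa [Nat.odd_add_one] using hp
          rw [if_pos hpj, if_neg hp]
          rfl
      · have hA := ih.2 hge
        rw [T3_succ (zg 0 z) 0 (j+1) g1 g2 (by omega) (by omega), zg_shift 0 z (j+1) (by omega),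
          hA, step_add, ← T3_succ z 0 j hz1 hz2 (by omega) (by omega)]
        congr 1
        by_cases hp : Odd e
        · rw [if_pos hp, if_pos hp, ← T3_succ z 1 j hz1 hz2 (by omega) (by omega)]
        · rw [if_neg hp, if_neg hp]
          unfold step
          split <;> rfl




lemma le_fib_succ : ∀ i, i ≤ Nat.fib i + 1
  | 0 => by decide
  | 1 => by decide
  | (i+2) => by
    rcases Nat.eq_zero_or_pos i with rfl | hi
    · decide
    · have h2 := le_fib_succ (i+1)
      have h3 : 1 ≤ Nat.fib i := Nat.fib_pos.mpr hi
      have h4 : Nat.fib (i+2) = Nat.fib i + Nat.fib (i+1) := Nat.fib_add_two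
      omega

lemma R_eq_cnt (t L : ℕ) (hL : t + 1 ≤ L) : R t = cnt 0 L t := by
  rw [R, cnt]
  have hiff : ∀ S : Finset ℕ,
      ((∀ i ∈ S, 2 ≤ i) ∧ ∑ i ∈ S, Nat.fib i = t) ↔
      (S ∈ (Icc 2 L).powerset.filter (fun S => (∑ i ∈ S, Nat.fib i) + 0 = t)) := by
    intro S
    simp only [Finset.mem_filter, Finset.mem_powerset, add_zero]
    constructor
    · rintro ⟨h1, h2⟩
      refine ⟨fun i hi => ?_, h2⟩
      have hfle : Nat.fib i ≤ t := h2 ▸ Finset.single_le_sum (fun i _ => Nat.zero_le _) hi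
      have := le_fib_succ i
      simp only [mem_Icc]
      exact ⟨h1 i hi, by omega⟩
    · rintro ⟨h1, h2⟩
      exact ⟨fun i hi => (mem_Icc.mp (h1 hi)).1, h2⟩
  rw [Nat.card_congr (Equiv.subtypeEquivRight hiff)]
  exact Nat.card_eq_finsetCard _

lemma sum_reindex {M : Type*} [AddCommMonoid M] (k : ℕ) (F : ℕ → M) :
    ∑ j ∈ Icc 2 (k+1), F j = ∑ i : Fin k, F (k+1-(i:ℕ)) := by
  refine Finset.sum_bij' (fun j hj => (⟨k+1-j, by simp only [mem_Icc] at hj; omega⟩ : Fin k))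
    (fun i _ => k+1-(i:ℕ)) ?_ ?_ ?_ ?_ ?_
  · intro a ha; exact Finset.mem_univ _
  · intro i _
    simp only [mem_Icc]
    have := i.2
    omega
  · intro a ha
    simp only [mem_Icc] at ha
    show k + 1 - (k + 1 - a) = a
    omega
  · intro i _
    apply Fin.ext
    show k + 1 - (k + 1 - (i:ℕ)) = (i:ℕ)
    have := i.2
    omega
  · intro a ha
    simp only [mem_Icc] at ha
    show F a = F (k + 1 - (k + 1 - a))
    congr 1
    omega

lemma sum_shift {M : Type*} [AddCommMonoid M] (a b : ℕ) (F : ℕ → M) :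
    ∑ j ∈ Icc (a+1) (b+1), F j = ∑ j ∈ Icc a b, F (j+1) := by
  refine Finset.sum_bij' (fun j _ => j - 1) (fun j _ => j + 1) ?_ ?_ ?_ ?_ ?_
  · intro x hx; simp only [mem_Icc] at hx ⊢; omega
  · intro x hx; simp only [mem_Icc] at hx ⊢; omega
  · intro x hx; simp only [mem_Icc] at hx; show x - 1 + 1 = x; omega
  · intro x hx; simp only [mem_Icc] at hx; show x + 1 - 1 = x; omega
  · intro x hx
    simp only [mem_Icc] at hx
    show F x = F (x - 1 + 1)
    congr 1
    omega

lemma geom_closed (r : ℝ) : ∀ N m, m ≤ N → (∑ j ∈ Ico m N, r^j) * (1-r) = r^m - r^N := by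
  intro N
  induction N with
  | zero => intro m hm; simp [Nat.le_zero.mp hm]
  | succ N ih =>
    intro m hm
    rcases Nat.lt_or_ge m (N+1) with h | h
    · have hmN : m ≤ N := by omega
      rw [Finset.sum_Ico_succ_top hmN, add_mul, ih m hmN]
      ring
    · have : m = N + 1 := by omega
      simp [this]

lemma sign_lemma (k : ℕ) (z : ℕ → ℕ) (hz1 : ∀ i, z i ≤ 1) (e : ℕ)
    (he : 2 ≤ e) (hze : z e = 1) (hzlt : ∀ i, i < e → z i = 0) (hze1 : z (e+1) = 0)
    (htop : ∀ i, k+1 < i → z i = 0) (hek : e ≤ k+1) :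
    (Odd e → (∑ j ∈ Icc 2 (k+1), (z j : ℝ) * psi ^ j) < 0) ∧
    (Even e → 0 < ∑ j ∈ Icc 2 (k+1), (z j : ℝ) * psi ^ j) := by
  have h5 : (Real.sqrt 5)^2 = 5 := Real.sq_sqrt (by norm_num)
  have h5nn : 0 ≤ Real.sqrt 5 := Real.sqrt_nonneg 5
  set r : ℝ := (Real.sqrt 5 - 1)/2 with hrdef
  have hψ : psi = -r := by rw [psi, hrdef]; ring
  have hr0 : 0 < r := by rw [hrdef]; nlinarith
  have hr1 : r < 1 := by rw [hrdef]; nlinarith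
  have hr2 : r^2 = 1 - r := by rw [hrdef]; nlinarith
  set M := k + e + 2 with hMdef
  have hext : ∑ j ∈ Icc 2 (k+1), (z j : ℝ) * psi ^ j = ∑ j ∈ Icc 2 M, (z j : ℝ) * psi ^ j := by
    apply Finset.sum_subset
    · intro x hx; simp only [mem_Icc] at hx ⊢; omega
    · intro x hx hx2
      simp only [mem_Icc] at hx hx2
      have : z x = 0 := by
        rcases Nat.lt_or_ge (k+1) x with h | h
        · exact htop x h
        · omega
      rw [this]; simp
  have hunion : Icc 2 M = Icc 2 (e+1) ∪ Icc (e+2) M := by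
    ext x; simp only [mem_Icc, mem_union]; omega
  have hdisj : Disjoint (Icc 2 (e+1)) (Icc (e+2) M) := by
    rw [Finset.disjoint_left]
    intro x hx hx2
    simp only [mem_Icc] at hx hx2
    omega
  have hhead : ∑ j ∈ Icc 2 (e+1), (z j : ℝ) * psi ^ j = psi ^ e := by
    rw [Finset.sum_eq_single_of_mem e (by simp only [mem_Icc]; omega)]
    · rw [hze]; simp
    · intro x hx hxe
      simp only [mem_Icc] at hx
      have : z x = 0 := by
        rcases Nat.lt_or_ge x e with h | h
        · exact hzlt x h
        · have : x = e + 1 := by omega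
          rw [this]; exact hze1
      rw [this]; simp
  set tail := ∑ j ∈ Icc (e+2) M, (z j : ℝ) * psi ^ j with htail
  have hsplit : ∑ j ∈ Icc 2 M, (z j : ℝ) * psi ^ j = psi ^ e + tail := by
    rw [hunion, Finset.sum_union hdisj, hhead]
  -- bound tail
  have habs : |tail| ≤ ∑ j ∈ Icc (e+2) M, r ^ j := by
    refine le_trans (Finset.abs_sum_le_sum_abs _ _) ?_
    apply Finset.sum_le_sum
    intro i _
    rw [abs_mul, abs_pow, hψ, abs_neg, abs_of_pos hr0]
    have h1 : |(z i : ℝ)| ≤ 1 := by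
      rw [abs_of_nonneg (by positivity)]
      exact_mod_cast hz1 i
    calc |(z i : ℝ)| * r ^ i ≤ 1 * r ^ i := by
          apply mul_le_mul_of_nonneg_right h1 (by positivity)
      _ = r ^ i := one_mul _
  have hgeo : ∑ j ∈ Icc (e+2) M, r ^ j < r ^ e := by
    have h1 : Icc (e+2) M = Ico (e+2) (M+1) := by
      ext x; simp only [mem_Icc, mem_Ico]; omega
    have h2 := geom_closed r (M+1) (e+2) (by omega)
    have h3 : (∑ j ∈ Ico (e+2) (M+1), r^j) * r^2 = r^(e+2) - r^(M+1) := by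
      rw [hr2]; exact h2
    have h4 : r^(e+2) = r^e * r^2 := by ring
    have h5' : 0 < r^(M+1) := pow_pos hr0 _
    have h6 : (∑ j ∈ Ico (e+2) (M+1), r^j) * r^2 < r^e * r^2 := by
      rw [h3, ← h4]; linarith
    rw [h1]
    exact lt_of_mul_lt_mul_right h6 (by positivity)
  have htb : |tail| < r ^ e := lt_of_le_of_lt habs hgeo
  constructor
  · intro hodd
    have hpe : psi ^ e = -(r^e) := by rw [hψ]; exact Odd.neg_pow hodd r
    rw [hext, hsplit, hpe]
    have := abs_lt.mp htb
    linarith [this.2]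
  · intro heven
    have hpe : psi ^ e = r^e := by rw [hψ]; exact Even.neg_pow heven r
    rw [hext, hsplit, hpe]
    have := abs_lt.mp htb
    linarith [this.1]




lemma cnt_congr_shift (L t : ℕ) (ht : 1 ≤ t) : cnt 1 L t = cnt 0 L (t-1) := by
  rw [cnt, cnt]
  congr 1
  apply Finset.filter_congr
  intro S _
  constructor <;> intro h <;> omega

lemma vd_stable (z : ℕ → ℕ) (N : ℕ) (hN : 1 ≤ N) (htop : ∀ i, N < i → z i = 0) :
    ∀ j, N ≤ j → vd z j = vd z N := by
  intro j hj
  induction j, hj using Nat.le_induction with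
  | base => rfl
  | succ j hj ih =>
    rw [vd_succ z j (by omega), htop (j+1) (by omega), ih]
    simp

lemma T3_fst_stable (z : ℕ → ℕ) (o N : ℕ) (h1 : ∀ i, z i ≤ 1) (h2 : ∀ i, z i * z (i+1) = 0)
    (ho : o ≤ 1) (hN : 1 ≤ N) (htop : ∀ i, N < i → z i = 0) :
    ∀ j, N ≤ j → (T3 z o j).1 = (T3 z o N).1 := by
  intro j hj
  induction j, hj using Nat.le_induction with
  | base => rfl
  | succ j hj ih =>
    rw [T3_succ z o j h1 h2 (by omega) ho, htop (j+1) (by omega), ← ih]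
    rfl



end S11

open S11

/-- let n ≥ 1 have Zeckendorf word b_1⋯b_k with b_k = 0, and let
m = ∑ b_i F_{k+3−i} + 1 (Zeckendorf word b_1⋯b_k 1).  If y_n < 0 then R(m) = R(n) and
R(m−1) = R(n) + R(n−1); if 0 < y_n < 1/φ³ then R(m) = R(n) and R(m−1) = R(n). -/
theorem stmt_11 (n : ℕ) (hn : 1 ≤ n) {k : ℕ} (hk : 0 < k) (b : Fin k → ℕ)
    (hb : IsZeck n b) (hlast : b ⟨k - 1, by omega⟩ = 0)
    (m : ℕ) (hm : m = (∑ i : Fin k, b i * Nat.fib (k + 2 - (i : ℕ))) + 1) :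
    (Yw b < 0 → R m = R n ∧ R (m - 1) = R n + R (n - 1)) ∧
    (0 < Yw b ∧ Yw b < 1 / phi ^ 3 → R m = R n ∧ R (m - 1) = R n) := by
  obtain ⟨hbin, hfirst, hnc, hNw⟩ := hb
  rw [Nw] at hNw
  -- the digit word z (z j = digit of F_j in the Zeckendorf rep of n)
  set z : ℕ → ℕ := fun j => if h : 2 ≤ j ∧ j ≤ k + 1 then b ⟨k+1-j, by omega⟩ else 0 with hzdef
  have hzval : ∀ j, 2 ≤ j → j ≤ k+1 → ∀ (hh : k+1-j < k), z j = b ⟨k+1-j, hh⟩ := by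
    intro j h2 hk2 hh
    rw [hzdef]
    simp only [dif_pos (⟨h2, hk2⟩ : 2 ≤ j ∧ j ≤ k+1)]
  have hz0 : ∀ j, (j < 2 ∨ k+1 < j) → z j = 0 := by
    intro j hj
    rw [hzdef]
    simp only [dif_neg (by omega : ¬(2 ≤ j ∧ j ≤ k+1))]
  have hz1 : ∀ i, z i ≤ 1 := by
    intro i
    by_cases h : 2 ≤ i ∧ i ≤ k+1
    · rw [hzval i h.1 h.2 (by omega)]
      exact hbin _
    · rw [hz0 i (by omega)]
      omega
  have hznc : ∀ i, z i * z (i+1) = 0 := by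
    intro i
    rcases Nat.lt_or_ge i 2 with h2 | h2
    · rw [hz0 i (Or.inl h2), zero_mul]
    rcases Nat.lt_or_ge k i with hK | hK
    · rw [hz0 (i+1) (Or.inr (by omega)), mul_zero]
    · have hh1 : k+1-i < k := by omega
      have hh2 : k+1-(i+1) < k := by omega
      rw [hzval i h2 (by omega) hh1, hzval (i+1) (by omega) (by omega) hh2]
      have key := hnc ⟨k+1-(i+1), hh2⟩ ⟨k+1-i, hh1⟩
        (show k+1-i = k+1-(i+1)+1 by omega)
      rw [mul_comm]
      exact key
  have hz20 : z 2 = 0 := by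
    have hh : k+1-2 < k := by omega
    rw [hzval 2 (by omega) (by omega) hh]
    have : (⟨k+1-2, hh⟩ : Fin k) = ⟨k-1, by omega⟩ := by
      apply Fin.ext
      show k+1-2 = k-1
      omega
    rw [this]
    exact hlast
  have hztop : z (k+1) = 1 := by
    have hh : k+1-(k+1) < k := by omega
    rw [hzval (k+1) (by omega) (by omega) hh]
    have : (⟨k+1-(k+1), hh⟩ : Fin k) = ⟨0, hk⟩ := by
      apply Fin.ext
      show k+1-(k+1) = 0
      omega
    rw [this]
    exact hfirst hk
  have hzabove : ∀ i, k+1 < i → z i = 0 := fun i hi => hz0 i (Or.inr hi)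
  -- least index e
  have hex : ∃ i, z i = 1 := ⟨k+1, hztop⟩
  set e := Nat.find hex with hedef
  have hze : z e = 1 := Nat.find_spec hex
  have hzlt : ∀ i, i < e → z i = 0 := by
    intro i hi
    have h1 := Nat.find_min hex hi
    have h2 := hz1 i
    omega
  have hek : e ≤ k+1 := Nat.find_le hztop
  have he3 : 3 ≤ e := by
    by_contra h
    push_neg at h
    interval_cases e
    · rw [hz0 0 (Or.inl (by omega))] at hze; omega
    · rw [hz0 1 (Or.inl (by omega))] at hze; omega
    · rw [hz20] at hze; omega
  have hze1 : z (e+1) = 0 := by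
    have := hznc e
    rw [hze, one_mul] at this
    exact this
  -- Yw reindex
  have hYz : Yw b = ∑ j ∈ Icc 2 (k+1), (z j : ℝ) * psi ^ j := by
    rw [Yw, sum_reindex k (fun j => (z j : ℝ) * psi ^ j)]
    apply Finset.sum_congr rfl
    intro i _
    have hh : k+1-(k+1-(i:ℕ)) < k := by have := i.2; omega
    rw [hzval (k+1-(i:ℕ)) (by have := i.2; omega) (by omega) hh]
    have : (⟨k+1-(k+1-(i:ℕ)), hh⟩ : Fin k) = i := by
      apply Fin.ext
      show k+1-(k+1-(i:ℕ)) = (i:ℕ)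
      have := i.2
      omega
    rw [this]
  -- n as vd
  have hvdn : vd z (k+1) = n := by
    rw [vd, sum_reindex k (fun j => z j * Nat.fib j), ← hNw]
    apply Finset.sum_congr rfl
    intro i _
    have hh : k+1-(k+1-(i:ℕ)) < k := by have := i.2; omega
    rw [hzval (k+1-(i:ℕ)) (by have := i.2; omega) (by omega) hh]
    have : (⟨k+1-(k+1-(i:ℕ)), hh⟩ : Fin k) = i := by
      apply Fin.ext
      show k+1-(k+1-(i:ℕ)) = (i:ℕ)
      have := i.2
      omega
    rw [this]
  -- m-1 as vd of the shifted word
  have hm1 : 1 ≤ m := by omega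
  have hzg3 : ∀ (c : ℕ) j, 3 ≤ j → zg c z j = z (j-1) := by
    intro c j hj
    unfold zg
    rw [if_neg (by omega), if_pos hj]
  have hvdm : ∀ c : ℕ, vd (zg c z) (k+2) = c + (m - 1) := by
    intro c
    have hsplit : Icc 2 (k+2) = insert 2 (Icc 3 (k+2)) := by
      ext x; simp only [mem_Icc, mem_insert]; omega
    rw [vd, hsplit, Finset.sum_insert (by simp [mem_Icc])]
    have h1 : ∑ i ∈ Icc 3 (k+2), zg c z i * Nat.fib i
        = ∑ i ∈ Icc 3 (k+2), z (i-1) * Nat.fib i := by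
      apply Finset.sum_congr rfl
      intro x hx
      simp only [mem_Icc] at hx
      rw [hzg3 c x hx.1]
    have h2 : ∑ i ∈ Icc 3 (k+2), z (i-1) * Nat.fib i
        = ∑ i ∈ Icc 2 (k+1), z i * Nat.fib (i+1) := by
      rw [show (3:ℕ) = 2+1 from rfl, show k+2 = (k+1)+1 from rfl,
        sum_shift 2 (k+1) (fun i => z (i-1) * Nat.fib i)]
      apply Finset.sum_congr rfl
      intro x _
      simp
    have h3 : ∑ i ∈ Icc 2 (k+1), z i * Nat.fib (i+1)
        = ∑ i : Fin k, b i * Nat.fib (k+2-(i:ℕ)) := by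
      rw [sum_reindex k (fun j => z j * Nat.fib (j+1))]
      apply Finset.sum_congr rfl
      intro i _
      have hh : k+1-(k+1-(i:ℕ)) < k := by have := i.2; omega
      rw [hzval (k+1-(i:ℕ)) (by have := i.2; omega) (by omega) hh]
      have he1 : (⟨k+1-(k+1-(i:ℕ)), hh⟩ : Fin k) = i := by
        apply Fin.ext
        show k+1-(k+1-(i:ℕ)) = (i:ℕ)
        have := i.2
        omega
      have he2 : k+1-(i:ℕ)+1 = k+2-(i:ℕ) := by have := i.2; omega
      rw [he1, he2]
    rw [h1, h2, h3, zg_two]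
    simp [Nat.fib_two]
    omega
  -- the big level
  set L := k + n + m + 5 with hLdef
  have hL1 : k + 1 ≤ L := by omega
  have hzgtop : ∀ (c : ℕ), ∀ i, k+2 < i → zg c z i = 0 := by
    intro c i hi
    rw [hzg3 c i (by omega)]
    exact hzabove (i-1) (by omega)
  have hvdL : vd z L = n := by
    rw [vd_stable z (k+1) (by omega) hzabove L hL1, hvdn]
  have hvdmL : ∀ c : ℕ, vd (zg c z) (L+1) = c + (m-1) := by
    intro c
    rw [vd_stable (zg c z) (k+2) (by omega) (hzgtop c) (L+1) (by omega), hvdm]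
  -- R values as T3 components
  have hRn : R n = (T3 z 0 L).1 := by
    rw [T3, R_eq_cnt n L (by omega), hvdL]
  have hRn1 : R (n-1) = (T3 z 1 L).1 := by
    rw [T3, R_eq_cnt (n-1) L (by omega), hvdL, cnt_congr_shift L n hn]
  have hRm : R m = (T3 (zg 1 z) 0 (L+1)).1 := by
    rw [T3, R_eq_cnt m (L+1) (by omega), hvdmL 1]
    show cnt 0 (L+1) m = cnt 0 (L+1) (1 + (m-1))
    rw [show 1 + (m-1) = m by omega]
  have hRm1 : R (m-1) = (T3 (zg 0 z) 0 (L+1)).1 := by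
    rw [T3, R_eq_cnt (m-1) (L+1) (by omega), hvdmL 0]
    show cnt 0 (L+1) (m-1) = cnt 0 (L+1) (0 + (m-1))
    rw [zero_add]
  -- main identities
  have main1 : R m = R n := by
    rw [hRm, hRn, claim1 z hz1 hznc hz20 L (by omega)]
  have main2 : R (m-1) = R n + (if Odd e then R (n-1) else 0) := by
    have hc := (claimPar z hz1 hznc hz20 e he3 hze hzlt L (by omega)).2 (by omega)
    rw [hRm1, hc, Prod.fst_add, ← hRn]
    congr 1
    by_cases hp : Odd e
    · rw [if_pos hp, if_pos hp, hRn1]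
    · rw [if_neg hp, if_neg hp]
      rfl
  -- sign of Yw vs parity of e
  have hsign := sign_lemma k z hz1 e (by omega) hze hzlt hze1 hzabove hek
  constructor
  · intro hY
    have hod : Odd e := by
      rcases Nat.even_or_odd e with h | h
      · exfalso
        have := hsign.2 h
        rw [hYz] at hY
        linarith
      · exact h
    exact ⟨main1, by rw [main2, if_pos hod]⟩
  · intro hYc
    have hY := hYc.1
    have hev : Even e := by
      rcases Nat.even_or_odd e with h | h
      · exact h
      · exfalso
        have := hsign.1 h
        rw [hYz] at hY
        linarith
    refine ⟨main1, ?_⟩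
    rw [main2, if_neg (by rwa [← Nat.not_odd_iff_even] at hev), add_zero]
end
end
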